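/- arXiv:2206.09662 — 5 statements merged into one kernel-verified Lean document; each statement's English description precedes it below -/
import Mathlib

section
/- Let G be a multigraph and f a divisor on G. If some legal game from f ends at a stable divisor s, then every legal game from f that ends at a stable divisor ends at the same divisor s, and there is no infinite sequence of vertices all of whose finite initial segments are legal games from f. In other words, starting from a given divisor, either every game halts and ends with the same stable divisor, or every game continues indefinitely. -/
variable {V : Type*} [Fintype V] [DecidableEq V]

/-- The degree of vertex `v` in the multigraph with edge-multiplicity function `m`. -/
def mgDeg (m : V → V → ℕ) (v : V) : ℕ := ∑ u, m v u

/-- The divisor obtained from `f` by firing vertex `v`. -/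
def mgFire (m : V → V → ℕ) (f : V → ℤ) (v : V) : V → ℤ :=
  fun u => if u = v then f v - mgDeg m v else f u + m v u

/-- The divisor obtained from `f` by firing the vertices of `L` in order. -/
def mgPlay (m : V → V → ℕ) (f : V → ℤ) (L : List V) : V → ℤ :=
  L.foldl (mgFire m) f

/-- `L` is a legal game from `f`: each fired vertex is active when fired. -/
def mgLegal (m : V → V → ℕ) : (V → ℤ) → List V → Prop
  | _, [] => True
  | f, v :: L => ((mgDeg m v : ℤ) ≤ f v) ∧ mgLegal m (mgFire m f v) L

/-- A divisor is stable if no vertex is active. -/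
def mgStable (m : V → V → ℕ) (f : V → ℤ) : Prop := ∀ v, f v < (mgDeg m v : ℤ)

/-- A divisor is halting if some legal game from it ends at a stable divisor. -/
def mgHalting (m : V → V → ℕ) (f : V → ℤ) : Prop :=
  ∃ L : List V, mgLegal m f L ∧ mgStable m (mgPlay m f L)

/-- A divisor is recurrent if some non-empty legal game from it leads back to it. -/
def mgRecurrent (m : V → V → ℕ) (f : V → ℤ) : Prop :=
  ∃ L : List V, L ≠ [] ∧ mgLegal m f L ∧ mgPlay m f L = f

/-- A divisor is effective if it is nonnegative everywhere. -/
def mgEffective (f : V → ℤ) : Prop := ∀ v, 0 ≤ f v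

/-- The degree of a divisor. -/
def mgDegDiv (f : V → ℤ) : ℤ := ∑ v, f v

/-- Distance of a divisor from a recurrent state. -/
noncomputable def mgDistRec (m : V → V → ℕ) (f : V → ℤ) : ℕ :=
  sInf {n : ℕ | ∃ g : V → ℤ, mgEffective g ∧ mgDegDiv g = (n : ℤ) ∧ mgRecurrent m (f + g)}

/-- Distance of a divisor from a non-halting state. -/
noncomputable def mgDistNonhalt (m : V → V → ℕ) (f : V → ℤ) : ℕ :=
  sInf {n : ℕ | ∃ g : V → ℤ, mgEffective g ∧ mgDegDiv g = (n : ℤ) ∧ ¬ mgHalting m (f + g)}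

/-- A multigraph is connected if any two vertices are joined by a path of
positive-multiplicity edges. -/
def mgConnected (m : V → V → ℕ) : Prop :=
  ∀ u v : V, Relation.ReflTransGen (fun a b => 0 < m a b) u v

/-- `f` and `g` are linearly equivalent: `f` can be transformed to `g` by firings. -/
def mgLinEquiv (m : V → V → ℕ) (f g : V → ℤ) : Prop :=
  ∃ L : List V, mgPlay m f L = g

/-- A divisor is winnable if it is linearly equivalent to an effective divisor. -/
def mgWinnable (m : V → V → ℕ) (f : V → ℤ) : Prop :=
  ∃ g : V → ℤ, mgEffective g ∧ mgLinEquiv m f g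

/-- The rank of a divisor. -/
noncomputable def mgRank (m : V → V → ℕ) (f : V → ℤ) : ℤ :=
  ((sInf {n : ℕ | ∃ g : V → ℤ, mgEffective g ∧ mgDegDiv g = (n : ℤ) ∧
    ¬ mgWinnable m (f - g)} : ℕ) : ℤ) - 1

lemma mgFire_comm (m : V → V → ℕ) (f : V → ℤ) (v w : V) :
    mgFire m (mgFire m f v) w = mgFire m (mgFire m f w) v := by
  funext u
  simp only [mgFire]
  by_cases huv : u = v <;> by_cases huw : u = w <;>
    by_cases hvw : v = w <;> simp_all <;> ring

instance mgFireRC (m : V → V → ℕ) : RightCommutative (mgFire m) :=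
  ⟨fun f v w => mgFire_comm m f v w⟩

lemma mgPlay_perm (m : V → V → ℕ) (f : V → ℤ) {L L' : List V} (h : L.Perm L') :
    mgPlay m f L = mgPlay m f L' := h.foldl_eq f

/-- Exchange lemma: if `L` is a legal game ending at a stable divisor and `v`
is active, then `v` can be fired first. -/
lemma mgExchange (m : V → V → ℕ) (v : V) :
    ∀ (L : List V) (f : V → ℤ), mgLegal m f L → mgStable m (mgPlay m f L) →
      (mgDeg m v : ℤ) ≤ f v →
      ∃ M : List V, mgLegal m (mgFire m f v) M ∧ (v :: M).Perm L := by
  intro L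
  induction L with
  | nil =>
    intro f _ hstab hv
    exact absurd hv (not_le.2 (hstab v))
  | cons w R ih =>
    intro f hL hstab hv
    by_cases hwv : w = v
    · subst hwv
      exact ⟨R, hL.2, List.Perm.refl _⟩
    · have hv' : (mgDeg m v : ℤ) ≤ mgFire m f w v := by
        simp only [mgFire, if_neg (Ne.symm hwv)]
        have : (0 : ℤ) ≤ (m w v : ℤ) := Int.natCast_nonneg _
        omega
      obtain ⟨M', hM'legal, hM'perm⟩ := ih (mgFire m f w) hL.2 hstab hv'
      refine ⟨w :: M', ⟨?_, ?_⟩, ?_⟩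
      · simp only [mgFire, if_neg hwv]
        have : (0 : ℤ) ≤ (m v w : ℤ) := Int.natCast_nonneg _
        have := hL.1
        omega
      · rw [mgFire_comm]
        exact hM'legal
      · exact (List.Perm.swap w v M').trans (hM'perm.cons w)

/-- Any legal game `L'` can be completed to (a permutation of) `L`. -/
lemma mgAbsorb (m : V → V → ℕ) :
    ∀ (L' L : List V) (f : V → ℤ), mgLegal m f L → mgStable m (mgPlay m f L) →
      mgLegal m f L' →
      ∃ L'' : List V, mgLegal m (mgPlay m f L') L'' ∧ (L' ++ L'').Perm L := by
  intro L'
  induction L' with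
  | nil =>
    intro L f hL hstab _
    exact ⟨L, hL, by simp⟩
  | cons v T ih =>
    intro L f hL hstab hL'
    obtain ⟨M, hMlegal, hMperm⟩ := mgExchange m v L f hL hstab hL'.1
    have hstabM : mgStable m (mgPlay m (mgFire m f v) M) := by
      have : mgPlay m (mgFire m f v) M = mgPlay m f L := by
        have := mgPlay_perm m f hMperm
        simpa [mgPlay] using this
      rw [this]; exact hstab
    obtain ⟨L'', hL''legal, hL''perm⟩ := ih M (mgFire m f v) hMlegal hstabM hL'.2
    refine ⟨L'', hL''legal, ?_⟩
    have : ((v :: T) ++ L'').Perm (v :: M) := by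
      simpa using hL''perm.cons v
    exact this.trans hMperm

/-- If some legal game from `f` ends at a stable divisor, then every legal game
from `f` ending at a stable divisor ends at the same divisor, and there is no
infinite sequence of vertices all of whose finite initial segments are legal
games from `f`. -/
theorem stmt0 [Nonempty V] (m : V → V → ℕ) (hsymm : ∀ u v, m u v = m v u)
    (hloop : ∀ v, m v v = 0) (f : V → ℤ) (L : List V)
    (hL : mgLegal m f L) (hstab : mgStable m (mgPlay m f L)) :
    (∀ L' : List V, mgLegal m f L' → mgStable m (mgPlay m f L') →
      mgPlay m f L' = mgPlay m f L) ∧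
    ¬ ∃ s : ℕ → V, ∀ n : ℕ, mgLegal m f (List.ofFn (fun i : Fin n => s i)) := by
  constructor
  · intro L' hL' hstab'
    obtain ⟨L'', hL''legal, hperm⟩ := mgAbsorb m L' L f hL hstab hL'
    have hnil : L'' = [] := by
      cases L'' with
      | nil => rfl
      | cons u T => exact absurd hL''legal.1 (not_le.2 (hstab' u))
    subst hnil
    rw [List.append_nil] at hperm
    exact mgPlay_perm m f hperm
  · rintro ⟨s, hs⟩
    have h := hs (L.length + 1)
    obtain ⟨L'', _, hperm⟩ := mgAbsorb m _ L f hL hstab h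
    have hlen := hperm.length_eq
    simp [List.length_append] at hlen
    omega
end

section
/- Let G be a connected multigraph and f a divisor on G. Then f is winnable if and only if the divisor d_G − 1 − f, whose value at each vertex v is d_G(v) − 1 − f(v), is a halting divisor. -/
variable {V : Type*} [Fintype V] [DecidableEq V]

/-! Write `c = d_G - 1`. The involution `g ↦ c - g` exchanges effective and stable divisors and
preserves linear equivalence, because firing a script from `f` and the negated script from `c - f`
mirror each other. So `f` is winnable iff `c - f` is linearly equivalent to a stable divisor, and
a divisor with that property is halting by the least action principle: a firing script can be
shifted by a constant to become nonnegative, and a nonnegative script that stabilises a divisor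
can be carried out legally, since every active vertex must occur in it. -/

/-- The divisor reached from `f` by firing each vertex `u` exactly `x u` times, in any order and
regardless of legality; negative entries of the script `x` stand for borrowing. -/
def mgFireBy (m : V → V → ℕ) (f : V → ℤ) (x : V → ℤ) (v : V) : ℤ :=
  f v + ∑ u, x u * m u v - x v * mgDeg m v

section FiringScripts

variable {m : V → V → ℕ}

lemma mgFire_apply_of_loopless (hloop : ∀ v, m v v = 0) (f : V → ℤ) (a v : V) :
    mgFire m f a v = f v + m a v - if v = a then (mgDeg m a : ℤ) else 0 := by
  by_cases h : v = a <;> simp [mgFire, h, hloop]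

lemma mgFireBy_zero (f : V → ℤ) : mgFireBy m f 0 = f := by
  ext v
  simp [mgFireBy]

lemma mgFireBy_mgFire (hloop : ∀ v, m v v = 0) (f : V → ℤ) (a : V) (x : V → ℤ) :
    mgFireBy m (mgFire m f a) x = mgFireBy m f (x + Pi.single a 1) := by
  ext v
  simp only [mgFireBy, mgFire_apply_of_loopless hloop, Pi.add_apply, add_mul,
    Finset.sum_add_distrib, Pi.single_apply, ite_mul, one_mul, zero_mul, Finset.sum_ite_eq',
    Finset.mem_univ, if_true]
  by_cases h : v = a <;> simp [h] <;> ring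

lemma mgPlay_eq_mgFireBy (hloop : ∀ v, m v v = 0) (f : V → ℤ) (L : List V) :
    mgPlay m f L = mgFireBy m f (fun u => (L.count u : ℤ)) := by
  induction L generalizing f with
  | nil => exact (mgFireBy_zero f).symm
  | cons a L ih =>
    rw [mgPlay, List.foldl_cons, ← mgPlay, ih, mgFireBy_mgFire hloop]
    congr 1
    ext u
    simp [List.count_cons, Pi.single_apply, eq_comm (a := u)]

/-- By symmetry, firing every vertex once gives each vertex back exactly its degree. -/
lemma mgFireBy_add_const (hsymm : ∀ u v, m u v = m v u) (f x : V → ℤ) (k : ℤ) :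
    mgFireBy m f (x + fun _ => k) = mgFireBy m f x := by
  ext v
  have hdeg : ∑ u, (m u v : ℤ) = mgDeg m v := by
    simp only [mgDeg, Nat.cast_sum, hsymm _ v]
  simp only [mgFireBy, Pi.add_apply, add_mul, Finset.sum_add_distrib, ← Finset.mul_sum, hdeg]
  ring

lemma mgFireBy_neg (g f x : V → ℤ) :
    mgFireBy m g (-x) = g - (mgFireBy m f x - f) := by
  ext v
  simp only [mgFireBy, Pi.neg_apply, Pi.sub_apply, neg_mul, Finset.sum_neg_distrib]
  ring

lemma exists_add_const_nonneg {ι : Type*} [Fintype ι] (x : ι → ℤ) : ∃ k : ℤ, ∀ u, 0 ≤ x u + k :=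
  ⟨∑ u, |x u|, fun u => by
    have := Finset.single_le_sum (fun w _ => abs_nonneg (x w)) (Finset.mem_univ u)
    linarith [neg_abs_le (x u)]⟩

lemma exists_list_count_eq (c : V → ℕ) : ∃ L : List V, ∀ v, L.count v = c v :=
  ⟨(Finsupp.equivFunOnFinite.symm c).toMultiset.toList, fun v => by
    rw [← Multiset.coe_count, Multiset.coe_toList, Finsupp.count_toMultiset]; rfl⟩

lemma exists_mgPlay_eq_mgFireBy (hsymm : ∀ u v, m u v = m v u) (hloop : ∀ v, m v v = 0)
    (f x : V → ℤ) : ∃ L : List V, mgPlay m f L = mgFireBy m f x := by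
  obtain ⟨k, hk⟩ := exists_add_const_nonneg x
  obtain ⟨L, hL⟩ := exists_list_count_eq fun u => (x u + k).toNat
  refine ⟨L, ?_⟩
  rw [mgPlay_eq_mgFireBy hloop, ← mgFireBy_add_const hsymm f x k]
  congr 1
  ext u
  simp [hL, Int.toNat_of_nonneg (hk u)]

lemma mgLinEquiv_iff_exists_mgFireBy (hsymm : ∀ u v, m u v = m v u) (hloop : ∀ v, m v v = 0)
    (f g : V → ℤ) : mgLinEquiv m f g ↔ ∃ x : V → ℤ, mgFireBy m f x = g := by
  constructor
  · rintro ⟨L, rfl⟩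
    exact ⟨_, (mgPlay_eq_mgFireBy hloop f L).symm⟩
  · rintro ⟨x, rfl⟩
    exact exists_mgPlay_eq_mgFireBy hsymm hloop f x

lemma mgLinEquiv.sub_left (hsymm : ∀ u v, m u v = m v u) (hloop : ∀ v, m v v = 0)
    {f g : V → ℤ} (h : mgLinEquiv m f g) (c : V → ℤ) : mgLinEquiv m (c - f) (c - g) := by
  obtain ⟨x, rfl⟩ := (mgLinEquiv_iff_exists_mgFireBy hsymm hloop f g).1 h
  refine (mgLinEquiv_iff_exists_mgFireBy hsymm hloop _ _).2 ⟨-x, ?_⟩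
  rw [mgFireBy_neg (c - f) f x]
  abel

lemma le_mgFireBy_of_eq_zero {x : V → ℤ} (hx : ∀ u, 0 ≤ x u) {v : V} (hxv : x v = 0)
    (f : V → ℤ) : f v ≤ mgFireBy m f x v := by
  have : 0 ≤ ∑ u, x u * m u v := Finset.sum_nonneg fun u _ => mul_nonneg (hx u) (by positivity)
  simp only [mgFireBy, hxv, zero_mul, sub_zero]
  linarith

lemma mgHalting_of_mgStable_mgFireBy_of_nonneg (hloop : ∀ v, m v v = 0) (n : ℕ) :
    ∀ (f x : V → ℤ), (∀ u, 0 ≤ x u) → ∑ u, x u = n → mgStable m (mgFireBy m f x) →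
      mgHalting m f := by
  induction n with
  | zero =>
    intro f x hx hsum hst
    have hx0 : x = 0 := funext fun u =>
      (Finset.sum_eq_zero_iff_of_nonneg fun u _ => hx u).1 hsum u (Finset.mem_univ u)
    exact ⟨[], trivial, by rwa [hx0, mgFireBy_zero] at hst⟩
  | succ n ih =>
    intro f x hx hsum hst
    by_cases hf : mgStable m f
    · exact ⟨[], trivial, hf⟩
    obtain ⟨v, hv⟩ : ∃ v, (mgDeg m v : ℤ) ≤ f v := by simpa [mgStable] using hf
    have hxv : 1 ≤ x v := by
      by_contra! hlt
      have := le_mgFireBy_of_eq_zero (m := m) hx (le_antisymm (by omega) (hx v)) f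
      linarith [hst v]
    obtain ⟨L, hL, hLst⟩ := ih (mgFire m f v) (x - Pi.single v 1)
      (fun u => by by_cases h : u = v <;> simp [h, hx u]; omega)
      (by simp [Finset.sum_sub_distrib, hsum])
      (by rwa [mgFireBy_mgFire hloop, sub_add_cancel])
    exact ⟨v :: L, ⟨hv, hL⟩, hLst⟩

theorem mgHalting_iff_exists_mgStable_mgLinEquiv (hsymm : ∀ u v, m u v = m v u)
    (hloop : ∀ v, m v v = 0) (f : V → ℤ) :
    mgHalting m f ↔ ∃ g, mgStable m g ∧ mgLinEquiv m f g := by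
  constructor
  · rintro ⟨L, -, hL⟩
    exact ⟨_, hL, L, rfl⟩
  · rintro ⟨g, hg, hfg⟩
    obtain ⟨x, rfl⟩ := (mgLinEquiv_iff_exists_mgFireBy hsymm hloop f g).1 hfg
    obtain ⟨k, hk⟩ := exists_add_const_nonneg x
    refine mgHalting_of_mgStable_mgFireBy_of_nonneg hloop (∑ u, (x u + k)).toNat f
      (x + fun _ => k) hk ?_ (by rwa [mgFireBy_add_const hsymm])
    simp only [Pi.add_apply]
    exact (Int.toNat_of_nonneg (Finset.sum_nonneg fun u _ => hk u)).symm

end FiringScripts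

theorem stmt1_general (m : V → V → ℕ) (hsymm : ∀ u v, m u v = m v u)
    (hloop : ∀ v, m v v = 0) (f : V → ℤ) :
    mgWinnable m f ↔ mgHalting m (fun v => (mgDeg m v : ℤ) - 1 - f v) := by
  set c : V → ℤ := fun v => (mgDeg m v : ℤ) - 1
  have hstable : ∀ g, mgStable m (c - g) ↔ mgEffective g := fun g =>
    forall_congr' fun v => by simp only [c, Pi.sub_apply]; omega
  change _ ↔ mgHalting m (c - f)
  rw [mgHalting_iff_exists_mgStable_mgLinEquiv hsymm hloop]
  constructor
  · rintro ⟨e, he, hfe⟩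
    exact ⟨c - e, (hstable e).2 he, hfe.sub_left hsymm hloop c⟩
  · rintro ⟨g, hg, hfg⟩
    refine ⟨c - g, (hstable (c - g)).1 (by rwa [sub_sub_cancel]), ?_⟩
    simpa using hfg.sub_left hsymm hloop c

/-- A divisor `f` on a connected multigraph is winnable if and only if
`d_G - 1 - f` is a halting divisor. -/
theorem stmt1 [Nonempty V] (m : V → V → ℕ) (hsymm : ∀ u v, m u v = m v u)
    (hloop : ∀ v, m v v = 0) (hconn : mgConnected m) (f : V → ℤ) :
    mgWinnable m f ↔ mgHalting m (fun v => (mgDeg m v : ℤ) - 1 - f v) :=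
  stmt1_general m hsymm hloop f
end

section
/- Let G be a connected multigraph and f a divisor on G. Then f is recurrent if and only if there is a legal game starting from f in which every vertex fires exactly once. -/
variable {V : Type*} [Fintype V] [DecidableEq V]

/-! If a nonempty legal game returns to `f`, its vector of firing counts is harmonic for the
Laplacian, hence constant, equal to some `k > 0`, on a connected multigraph. For a nonempty set
`S` of vertices, the first vertex `w ∈ S` to fire for the `k`-th time was active at a moment
when the vertices of `S` had fired at most as often as `w` and all others at most once more;
this forces `f w ≥ ∑ u ∈ S, m u w`. Taking for `S` the vertices not fired yet, one can then fire
the vertices greedily, each once.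
Conversely, firing every vertex once leaves any divisor unchanged. -/

lemma mgPlay_append (m : V → V → ℕ) (f : V → ℤ) (P R : List V) :
    mgPlay m f (P ++ R) = mgPlay m (mgPlay m f P) R :=
  List.foldl_append

lemma mgLegal_append (m : V → V → ℕ) (f : V → ℤ) (P R : List V) :
    mgLegal m f (P ++ R) ↔ mgLegal m f P ∧ mgLegal m (mgPlay m f P) R := by
  induction P generalizing f with
  | nil => simp [mgLegal, mgPlay]
  | cons a P ih => simp [mgLegal, mgPlay, ih, and_assoc]

lemma mgLegal_append_singleton (m : V → V → ℕ) (f : V → ℤ) (L : List V) (v : V) :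
    mgLegal m f (L ++ [v]) ↔ mgLegal m f L ∧ (mgDeg m v : ℤ) ≤ mgPlay m f L v := by
  simp [mgLegal_append, mgLegal]

lemma mgPlay_apply (m : V → V → ℕ) (hloop : ∀ v, m v v = 0) (f : V → ℤ) (L : List V) (u : V) :
    mgPlay m f L u = f u + ∑ v, (L.count v : ℤ) * m v u - L.count u * mgDeg m u := by
  induction L using List.reverseRecOn with
  | nil => simp [mgPlay]
  | append_singleton L a ih =>
    rw [mgPlay_append, show mgPlay m (mgPlay m f L) [a] = mgFire m (mgPlay m f L) a from rfl]
    simp only [List.count_append, List.count_singleton, Nat.cast_add, add_mul,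
      Finset.sum_add_distrib, beq_iff_eq]
    rcases eq_or_ne u a with rfl | hne
    · simp [mgFire, ih, hloop]
      ring
    · simp [mgFire, ih, hne, hne.symm]
      ring

omit [DecidableEq V] in
lemma mgDeg_eq_sum_symm (m : V → V → ℕ) (hsymm : ∀ u v, m u v = m v u) (v : V) :
    (mgDeg m v : ℤ) = ∑ u, (m u v : ℤ) := by
  simp [mgDeg, hsymm v]

lemma mgPlay_eq_self_of_count_eq (m : V → V → ℕ) (hsymm : ∀ u v, m u v = m v u)
    (hloop : ∀ v, m v v = 0) (f : V → ℤ) (L : List V) (k : ℕ) (hk : ∀ v, L.count v = k) :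
    mgPlay m f L = f := by
  funext u
  rw [mgPlay_apply m hloop, mgDeg_eq_sum_symm m hsymm, Finset.mul_sum]
  simp [hk]

omit [DecidableEq V] in
/-- Minimum principle: the set where `c` attains its minimum is closed under adjacency. -/
lemma eq_of_harmonic (m : V → V → ℕ) (hconn : mgConnected m) (c : V → ℤ)
    (hc : ∀ u, ∑ v, m u v * c v = mgDeg m u * c u) (u w : V) : c u = c w := by
  obtain ⟨u₀, -, hmin⟩ := Finset.exists_min_image Finset.univ c ⟨u, Finset.mem_univ u⟩
  suffices h : ∀ w, c w = c u₀ by rw [h u, h w]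
  intro w
  induction hconn u₀ w with
  | refl => rfl
  | @tail a b _ hab ih =>
    have hsum : ∑ v, (m a v : ℤ) * (c v - c a) = 0 := by
      simp only [mul_sub, Finset.sum_sub_distrib, hc a, mgDeg, Nat.cast_sum, Finset.sum_mul]
      exact sub_self _
    have hterm := (Finset.sum_eq_zero_iff_of_nonneg fun v _ =>
      mul_nonneg (Nat.cast_nonneg _) (by linarith [hmin v (Finset.mem_univ v)])).1 hsum b
      (Finset.mem_univ b)
    rcases mul_eq_zero.1 hterm with h | h
    · exact absurd h (by positivity)
    · linarith

lemma count_eq_of_mgPlay_eq_self (m : V → V → ℕ) (hsymm : ∀ u v, m u v = m v u)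
    (hloop : ∀ v, m v v = 0) (hconn : mgConnected m) (f : V → ℤ) (L : List V)
    (hL : mgPlay m f L = f) (u w : V) : L.count u = L.count w := by
  have hharm : ∀ u, ∑ v, m u v * (L.count v : ℤ) = mgDeg m u * L.count u := by
    intro u
    have h := congrFun hL u
    rw [mgPlay_apply m hloop] at h
    simp only [hsymm u, mul_comm ((m _ u : ℕ) : ℤ)]
    linarith
  exact_mod_cast eq_of_harmonic m hconn _ hharm u w

lemma List.exists_split_of_pred_nil_of_not_pred {α : Type*} (p : List α → Prop) (L : List α)
    (hnil : p []) (hL : ¬ p L) : ∃ P w R, L = P ++ w :: R ∧ p P ∧ ¬ p (P ++ [w]) := by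
  induction L using List.reverseRecOn with
  | nil => exact absurd hnil hL
  | append_singleton L a ih =>
    by_cases hp : p L
    · exact ⟨L, a, [], rfl, hp, hL⟩
    · obtain ⟨P, w, R, rfl, hP, hPw⟩ := ih hp
      exact ⟨P, w, R ++ [a], by simp, hP, hPw⟩

lemma sum_le_of_active_of_count_le (m : V → V → ℕ) (hsymm : ∀ u v, m u v = m v u)
    (hloop : ∀ v, m v v = 0) (f : V → ℤ) (P : List V) (S : Finset V) (w : V)
    (hact : (mgDeg m w : ℤ) ≤ mgPlay m f P w) (hS : ∀ u ∈ S, P.count u ≤ P.count w)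
    (hSc : ∀ u ∉ S, P.count u ≤ P.count w + 1) :
    ∑ u ∈ S, (m u w : ℤ) ≤ f w := by
  have hbound : ∑ u, (P.count u : ℤ) * m u w ≤
      ∑ u, ((P.count w : ℤ) + if u ∈ S then 0 else 1) * m u w := by
    refine Finset.sum_le_sum fun u _ => mul_le_mul_of_nonneg_right ?_ (Nat.cast_nonneg _)
    split_ifs with hu
    · exact_mod_cast add_zero (P.count w) ▸ hS u hu
    · exact_mod_cast hSc u hu
  have hsplit : ∑ u, ((P.count w : ℤ) + if u ∈ S then 0 else 1) * m u w =
      P.count w * mgDeg m w + ∑ u ∈ Sᶜ, (m u w : ℤ) := by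
    simp only [add_mul, Finset.sum_add_distrib, ← Finset.mul_sum, mgDeg_eq_sum_symm m hsymm,
      ite_mul, zero_mul, one_mul, Finset.sum_ite, Finset.sum_const_zero, zero_add,
      Finset.filter_not, Finset.filter_mem_eq_inter, Finset.univ_inter, Finset.compl_eq_univ_sdiff]
  have hdeg : (mgDeg m w : ℤ) = ∑ u ∈ S, (m u w : ℤ) + ∑ u ∈ Sᶜ, (m u w : ℤ) := by
    rw [Finset.sum_add_sum_compl, mgDeg_eq_sum_symm m hsymm]
  rw [mgPlay_apply m hloop] at hact
  linarith

/-- In a legal game firing every vertex `k > 0` times, look at the first moment some vertex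
`w ∈ S` fires for the `k`-th time: then every vertex of `S` has fired at most as often as `w`,
and every other vertex at most once more. -/
lemma exists_sum_le_of_mgLegal_of_count_eq (m : V → V → ℕ) (hsymm : ∀ u v, m u v = m v u)
    (hloop : ∀ v, m v v = 0) (f : V → ℤ) (L : List V) (hL : mgLegal m f L) (k : ℕ) (hk : 0 < k)
    (hcount : ∀ v, L.count v = k) (S : Finset V) (hS : S.Nonempty) :
    ∃ w ∈ S, ∑ u ∈ S, (m u w : ℤ) ≤ f w := by
  obtain ⟨v, hv⟩ := hS
  obtain ⟨P, w, R, rfl, hP, hPw⟩ := List.exists_split_of_pred_nil_of_not_pred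
    (fun P => ∀ u ∈ S, P.count u < k) L (fun _ _ => by simpa using hk)
    (fun h => (h v hv).ne (hcount v))
  obtain ⟨u, hu, hku⟩ : ∃ u ∈ S, k ≤ (P ++ [w]).count u := by simpa using hPw
  have hle : ∀ u, P.count u ≤ k := fun u => hcount u ▸ (List.sublist_append_left P _).count_le u
  have hwu : w = u := by
    by_contra hne
    simp [List.count_append, hne] at hku
    exact (hP u hu).not_ge hku
  subst hwu
  have hkw : P.count w + 1 = k := by
    simp [List.count_append] at hku
    have := hP w hu
    omega
  refine ⟨w, hu, sum_le_of_active_of_count_le m hsymm hloop f P S w ?_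
    (fun u hu' => by have := hP u hu'; omega) (fun u _ => hkw ▸ hle u)⟩
  rw [mgLegal_append] at hL
  exact hL.2.1

/-- The vertex `v ∉ T` granted by `H` on `Tᶜ` holds `f v + ∑ u ∈ T, m u v ≥ mgDeg m v` chips
once every vertex of `T` has fired, so it may fire next. -/
lemma exists_mgLegal_count_eq_one (m : V → V → ℕ) (hsymm : ∀ u v, m u v = m v u)
    (hloop : ∀ v, m v v = 0) (f : V → ℤ)
    (H : ∀ S : Finset V, S.Nonempty → ∃ v ∈ S, ∑ u ∈ S, (m u v : ℤ) ≤ f v)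
    (T : Finset V) (L : List V) (hL : mgLegal m f L)
    (hT : ∀ v, L.count v = if v ∈ T then 1 else 0) :
    ∃ L' : List V, mgLegal m f L' ∧ ∀ v, L'.count v = 1 := by
  by_cases hTuniv : T = Finset.univ
  · exact ⟨L, hL, by simpa [hTuniv] using hT⟩
  obtain ⟨v, hvT, hv⟩ :=
    H Tᶜ (by simpa [Finset.Nonempty, Finset.eq_univ_iff_forall] using hTuniv)
  rw [Finset.mem_compl] at hvT
  have hact : (mgDeg m v : ℤ) ≤ mgPlay m f L v := by
    have hdeg : (mgDeg m v : ℤ) = ∑ u ∈ T, (m u v : ℤ) + ∑ u ∈ Tᶜ, (m u v : ℤ) := by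
      rw [Finset.sum_add_sum_compl, mgDeg_eq_sum_symm m hsymm]
    rw [mgPlay_apply m hloop]
    simp only [hT, hvT, Nat.cast_ite, Nat.cast_one, ite_mul, one_mul, zero_mul,
      Finset.sum_ite_mem, Finset.univ_inter, if_false, Nat.cast_zero, sub_zero]
    linarith
  refine exists_mgLegal_count_eq_one m hsymm hloop f H (insert v T) (L ++ [v])
    ((mgLegal_append_singleton m f L v).2 ⟨hL, hact⟩) fun u => ?_
  rcases eq_or_ne u v with rfl | huv
  · simp [hT, hvT]
  · simp [hT, huv, huv.symm]
termination_by Tᶜ.card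
decreasing_by
  exact Finset.card_lt_card
    (Finset.compl_ssubset_compl.2 (Finset.ssubset_insert (Finset.mem_compl.1 hvT)))

/-- A divisor on a connected multigraph is recurrent if and only if there is a
legal game from it in which every vertex fires exactly once. -/
theorem stmt3 [Nonempty V] (m : V → V → ℕ) (hsymm : ∀ u v, m u v = m v u)
    (hloop : ∀ v, m v v = 0) (hconn : mgConnected m) (f : V → ℤ) :
    mgRecurrent m f ↔ ∃ L : List V, mgLegal m f L ∧ ∀ v : V, L.count v = 1 := by
  constructor
  · rintro ⟨L, hne, hL, hplay⟩
    obtain ⟨a, ha⟩ := List.exists_mem_of_ne_nil L hne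
    have hcount : ∀ v, L.count v = L.count a :=
      (count_eq_of_mgPlay_eq_self m hsymm hloop hconn f L hplay · a)
    exact exists_mgLegal_count_eq_one m hsymm hloop f
      (exists_sum_le_of_mgLegal_of_count_eq m hsymm hloop f L hL _ (List.count_pos_iff.2 ha) hcount)
      ∅ [] trivial (by simp)
  · rintro ⟨L, hL, hcount⟩
    obtain ⟨v⟩ := ‹Nonempty V›
    refine ⟨L, fun h => by simpa [h] using hcount v, hL,
      mgPlay_eq_self_of_count_eq m hsymm hloop f L 1 hcount⟩
end

section
/- Let G be a connected multigraph and f a divisor on G. Then in any non-empty legal game starting from f whose resulting divisor is f itself, every vertex of G fires the same number of times. -/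
variable {V : Type*} [Fintype V] [DecidableEq V]

/-!
A game from `f` that fires each vertex `v` exactly `c v` times ends at `f - Δ c`, where `Δ` is the
graph Laplacian; so a game returning to `f` has a harmonic firing vector, `Δ c = 0`. A harmonic
function is, at each vertex, the weighted average of its values at the neighbours, so the set
where it attains its minimum is closed under adjacency and, the graph being connected, is
everything.
-/

open Finset

namespace Multigraph

variable {W : Type*} [Fintype W] (m : W → W → ℕ)

def laplacian (c : W → ℤ) (w : W) : ℤ := c w * mgDeg m w - ∑ u, c u * m u w

lemma laplacian_add (c d : W → ℤ) : laplacian m (c + d) = laplacian m c + laplacian m d := by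
  ext w
  simp only [laplacian, Pi.add_apply, add_mul, sum_add_distrib]
  ring

lemma mgFire_eq_sub_laplacian [DecidableEq W] (hloop : ∀ v, m v v = 0) (f : W → ℤ) (v : W) :
    mgFire m f v = f - laplacian m (Pi.single v 1) := by
  ext w
  by_cases hw : w = v
  · subst hw
    simp [mgFire, laplacian, Pi.single_apply, hloop]
  · simp [mgFire, laplacian, Pi.single_apply, hw]

lemma mgPlay_eq_sub_laplacian [DecidableEq W] (hloop : ∀ v, m v v = 0) (L : List W) (f : W → ℤ) :
    mgPlay m f L = f - laplacian m (fun v => (L.count v : ℤ)) := by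
  induction L generalizing f with
  | nil =>
    ext w
    simp [mgPlay, laplacian]
  | cons v L ih =>
    have hcount : (fun u => ((v :: L).count u : ℤ)) = Pi.single v 1 + fun u => (L.count u : ℤ) := by
      ext u
      by_cases hu : u = v
      · subst hu
        simp [add_comm]
      · simp [hu, Ne.symm hu]
    change mgPlay m (mgFire m f v) L = _
    rw [ih, mgFire_eq_sub_laplacian m hloop, hcount, laplacian_add, sub_sub]

lemma laplacian_eq_sum_sub_mul (hsymm : ∀ u v, m u v = m v u) (c : W → ℤ) (w : W) :
    laplacian m c w = ∑ u, (c w - c u) * m u w := by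
  simp only [laplacian, mgDeg, Nat.cast_sum, mul_sum, sub_mul, sum_sub_distrib, hsymm w]

lemma eq_of_laplacian_eq_zero (hsymm : ∀ u v, m u v = m v u) (hconn : mgConnected m)
    {c : W → ℤ} (hc : laplacian m c = 0) (u v : W) : c u = c v := by
  obtain ⟨a, -, ha⟩ := exists_min_image univ c ⟨u, mem_univ u⟩
  have hmin : ∀ x, c a ≤ c x := fun x => ha x (mem_univ x)
  have hneighbour : ∀ x y, c x = c a → 0 < m x y → c y = c a := by
    intro x y hx hxy
    have hsum : ∑ u, (c x - c u) * m u x = 0 := by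
      rw [← laplacian_eq_sum_sub_mul m hsymm, hc, Pi.zero_apply]
    have hterm := (sum_eq_zero_iff_of_nonpos fun u _ =>
      mul_nonpos_of_nonpos_of_nonneg (by linarith [hmin u]) (Nat.cast_nonneg (m u x))).mp
      hsum y (mem_univ y)
    have hyx : (m y x : ℤ) ≠ 0 := by rw [hsymm]; positivity
    linarith [(mul_eq_zero.mp hterm).resolve_right hyx]
  have hall : ∀ x, c x = c a := fun x => by
    induction hconn a x with
    | refl => rfl
    | tail _ hyz ih => exact hneighbour _ _ ih hyz
  rw [hall u, hall v]

end Multigraph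

theorem stmt4_general (m : V → V → ℕ) (hsymm : ∀ u v, m u v = m v u)
    (hloop : ∀ v, m v v = 0) (hconn : mgConnected m) (f : V → ℤ) (L : List V)
    (hret : mgPlay m f L = f) :
    ∀ u v : V, L.count u = L.count v := by
  have hharmonic : Multigraph.laplacian m (fun v => (L.count v : ℤ)) = 0 := by
    rw [Multigraph.mgPlay_eq_sub_laplacian m hloop] at hret
    exact sub_eq_self.mp hret
  intro u v
  exact_mod_cast Multigraph.eq_of_laplacian_eq_zero m hsymm hconn hharmonic u v

/-- In any non-empty legal game from `f` on a connected multigraph whose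
resulting divisor is `f` itself, every vertex fires the same number of times. -/
theorem stmt4 [Nonempty V] (m : V → V → ℕ) (hsymm : ∀ u v, m u v = m v u)
    (hloop : ∀ v, m v v = 0) (hconn : mgConnected m) (f : V → ℤ) (L : List V)
    (hne : L ≠ []) (hL : mgLegal m f L) (hret : mgPlay m f L = f) :
    ∀ u v : V, L.count u = L.count v :=
  stmt4_general m hsymm hloop hconn f L hret
end

section
/- Let G = (V, E) be a finite simple graph and τ : V → ℕ a threshold function with τ(v) ≤ d_G(v) for every v ∈ V, and let G' and x be the multigraph and divisor of the standard construction with N = |V| + 2. Then N > dist_rec_{G'}(x) + 1. -/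
set_option linter.unusedSectionVars false
set_option linter.unusedTactic false
set_option linter.unreachableTactic false


variable {V : Type*} [Fintype V] [DecidableEq V]

/-- One round of the activation process: every vertex with at least `τ v`
active neighbors becomes active (and active vertices stay active). -/
def tssStep (G : SimpleGraph V) [DecidableRel G.Adj] (τ : V → ℕ) (A : Finset V) : Finset V :=
  A ∪ Finset.univ.filter (fun v => τ v ≤ (A.filter (fun u => G.Adj v u)).card)

/-- `S` is a target set: the activation process starting from `S` eventually
activates all vertices. -/
def tssIsTargetSet (G : SimpleGraph V) [DecidableRel G.Adj] (τ : V → ℕ) (S : Finset V) : Prop :=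
  ∃ n : ℕ, (tssStep G τ)^[n] S = Finset.univ

/-- Minimum cardinality of a target set. -/
noncomputable def tssMin (G : SimpleGraph V) [DecidableRel G.Adj] (τ : V → ℕ) : ℕ :=
  sInf {k : ℕ | ∃ S : Finset V, tssIsTargetSet G τ S ∧ S.card = k}

/-- Auxiliary (one-directional) edge multiplicities of the standard construction.
In the vertex type `(V ⊕ V ⊕ V) ⊕ G.Dart`, the first, second and third summands
of `V ⊕ V ⊕ V` encode `v_i`, `v_c`, `v_o` respectively, and a dart `d = (u, v)`
encodes the vertex `p_{uv}`. -/
def consAux (G : SimpleGraph V) [DecidableRel G.Adj] (N : ℕ) :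
    (V ⊕ V ⊕ V) ⊕ G.Dart → (V ⊕ V ⊕ V) ⊕ G.Dart → ℕ
  | Sum.inl (Sum.inl v), Sum.inl (Sum.inr (Sum.inl w)) => if v = w then N else 0
  | Sum.inl (Sum.inr (Sum.inl v)), Sum.inl (Sum.inr (Sum.inr w)) => if v = w then 1 else 0
  | Sum.inl (Sum.inr (Sum.inr v)), Sum.inr d => if d.toProd.1 = v then N else 0
  | Sum.inr d, Sum.inl (Sum.inl v) => if d.toProd.2 = v then 1 else 0
  | _, _ => 0

/-- Edge-multiplicity function of the multigraph `G'` of the standard construction: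
`N` parallel edges between `v_i` and `v_c`, one edge between `v_c` and `v_o`, and,
for each edge `uv` of `G`, `N` parallel edges between `u_o` and `p_{uv}` and one
edge between `p_{uv}` and `v_i`. -/
def consM (G : SimpleGraph V) [DecidableRel G.Adj] (N : ℕ)
    (a b : (V ⊕ V ⊕ V) ⊕ G.Dart) : ℕ :=
  consAux G N a b + consAux G N b a

/-- The divisor `x` of the standard construction: `x(v_i) = d_G(v) + N - τ(v)`,
`x(v_c) = 1`, `x(v_o) = N * d_G(v)`, and `x(p) = 1` for every vertex `p_{uv}`. -/
def consX (G : SimpleGraph V) [DecidableRel G.Adj] (τ : V → ℕ) (N : ℕ) :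
    (V ⊕ V ⊕ V) ⊕ G.Dart → ℤ
  | Sum.inl (Sum.inl v) => (G.degree v : ℤ) + N - τ v
  | Sum.inl (Sum.inr (Sum.inl _)) => 1
  | Sum.inl (Sum.inr (Sum.inr v)) => (N : ℤ) * G.degree v
  | Sum.inr _ => 1


/-! ### Auxiliary material for the proof -/

section MyAux

def myDelta (m : V → V → ℕ) (v u : V) : ℤ := if u = v then -(mgDeg m v : ℤ) else m v u

lemma myFire_eq (m : V → V → ℕ) (f : V → ℤ) (v u : V) :
    mgFire m f v u = f u + myDelta m v u := by
  unfold mgFire myDelta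
  split
  · rename_i h; subst h; ring
  · rfl

lemma myPlay_eq (m : V → V → ℕ) (L : List V) (f : V → ℤ) (u : V) :
    mgPlay m f L u = f u + (L.map (fun v => myDelta m v u)).sum := by
  induction L generalizing f with
  | nil => simp [mgPlay]
  | cons v L ih =>
    show mgPlay m (mgFire m f v) L u = _
    rw [ih, myFire_eq]
    simp; ring

lemma myPlay_append (m : V → V → ℕ) (L1 L2 : List V) (f : V → ℤ) :
    mgPlay m f (L1 ++ L2) = mgPlay m (mgPlay m f L1) L2 := by
  simp [mgPlay, List.foldl_append]

lemma myLegal_append (m : V → V → ℕ) (L1 L2 : List V) (f : V → ℤ) :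
    mgLegal m f (L1 ++ L2) ↔ mgLegal m f L1 ∧ mgLegal m (mgPlay m f L1) L2 := by
  induction L1 generalizing f with
  | nil => simp [mgLegal, mgPlay]
  | cons v L ih =>
    show (_ ∧ mgLegal m (mgFire m f v) (L ++ L2)) ↔ _
    rw [ih]
    show _ ↔ (_ ∧ _) ∧ mgLegal m (mgPlay m (mgFire m f v) L) L2
    tauto

lemma myLegal_phase (m : V → V → ℕ) (L : List V) (f : V → ℤ)
    (hnd : L.Nodup) (hm : ∀ a ∈ L, ∀ b ∈ L, m a b = 0)
    (hf : ∀ v ∈ L, (mgDeg m v : ℤ) ≤ f v) : mgLegal m f L := by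
  induction L generalizing f with
  | nil => trivial
  | cons v L ih =>
    refine ⟨hf v (by simp), ih _ hnd.of_cons
      (fun a ha b hb => hm a (List.mem_cons_of_mem _ ha) b (List.mem_cons_of_mem _ hb)) ?_⟩
    intro w hw
    have hwv : w ≠ v := fun h => (List.nodup_cons.mp hnd).1 (h ▸ hw)
    rw [myFire_eq]
    have hz : myDelta m v w = 0 := by
      unfold myDelta
      rw [if_neg hwv, hm v (by simp) w (by simp [hw])]
      simp
    rw [hz, add_zero]
    exact hf w (by simp [hw])

end MyAux

section MyCons

variable (G : SimpleGraph V) [DecidableRel G.Adj]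

lemma my_symm_toProd (d : G.Dart) : d.symm.toProd = d.toProd.swap := rfl

lemma my_card_fst (v : V) :
    (Finset.univ.filter (fun d : G.Dart => d.toProd.1 = v)).card = G.degree v :=
  G.dart_fst_fiber_card_eq_degree v

lemma my_card_snd (v : V) :
    (Finset.univ.filter (fun d : G.Dart => d.toProd.2 = v)).card = G.degree v := by
  rw [← my_card_fst G v]
  apply Finset.card_bij (fun d _ => d.symm)
  · intro a ha
    simp only [Finset.mem_filter, Finset.mem_univ, true_and, my_symm_toProd,
      Prod.fst_swap] at ha ⊢
    exact ha
  · intro a _ b _ h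
    exact SimpleGraph.Dart.symm_involutive.injective h
  · intro b hb
    refine ⟨b.symm, ?_, (SimpleGraph.Dart.symm_symm b).symm⟩
    simp only [Finset.mem_filter, Finset.mem_univ, true_and, my_symm_toProd,
      Prod.snd_swap] at hb ⊢
    exact hb

lemma my_sum_fst {R : Type*} [Semiring R] (c : R) (v : V) :
    ∑ d : G.Dart, (if d.toProd.1 = v then c else 0) = c * G.degree v := by
  have h : ∀ d : G.Dart, (if d.toProd.1 = v then c else 0)
      = c * (if d.toProd.1 = v then 1 else 0) := by
    intro d; split <;> simp
  rw [Finset.sum_congr rfl (fun d _ => h d), ← Finset.mul_sum, Finset.sum_boole, my_card_fst]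

lemma my_sum_snd {R : Type*} [Semiring R] (c : R) (v : V) :
    ∑ d : G.Dart, (if d.toProd.2 = v then c else 0) = c * G.degree v := by
  have h : ∀ d : G.Dart, (if d.toProd.2 = v then c else 0)
      = c * (if d.toProd.2 = v then 1 else 0) := by
    intro d; split <;> simp
  rw [Finset.sum_congr rfl (fun d _ => h d), ← Finset.mul_sum, Finset.sum_boole, my_card_snd]

variable (N : ℕ)

lemma my_deg_i (v : V) :
    mgDeg (consM G N) (Sum.inl (Sum.inl v) : (V ⊕ V ⊕ V) ⊕ G.Dart) = N + G.degree v := by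
  simp [mgDeg, Fintype.sum_sum_type, consM, consAux, Finset.sum_ite_eq,
    Finset.sum_boole, my_card_snd]

lemma my_deg_c (v : V) :
    mgDeg (consM G N) (Sum.inl (Sum.inr (Sum.inl v)) : (V ⊕ V ⊕ V) ⊕ G.Dart) = N + 1 := by
  simp [mgDeg, Fintype.sum_sum_type, consM, consAux, Finset.sum_ite_eq, Finset.sum_ite_eq']

lemma my_deg_o (v : V) :
    mgDeg (consM G N) (Sum.inl (Sum.inr (Sum.inr v)) : (V ⊕ V ⊕ V) ⊕ G.Dart)
      = 1 + N * G.degree v := by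
  simp [mgDeg, Fintype.sum_sum_type, consM, consAux, Finset.sum_ite_eq,
    Finset.sum_ite_eq', my_sum_fst]

lemma my_deg_p (d : G.Dart) :
    mgDeg (consM G N) (Sum.inr d : (V ⊕ V ⊕ V) ⊕ G.Dart) = N + 1 := by
  simp [mgDeg, Fintype.sum_sum_type, consM, consAux, Finset.sum_ite_eq,
    Finset.sum_ite_eq', add_comm]

variable (τ : V → ℕ)

def myF0 : (V ⊕ V ⊕ V) ⊕ G.Dart → ℤ
  | Sum.inl (Sum.inl v) => (G.degree v : ℤ) + N - τ v
  | Sum.inl (Sum.inr (Sum.inl _)) => 1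
  | Sum.inl (Sum.inr (Sum.inr v)) => (N : ℤ) * G.degree v + 1
  | Sum.inr _ => 1

def myF1 : (V ⊕ V ⊕ V) ⊕ G.Dart → ℤ
  | Sum.inl (Sum.inl v) => (G.degree v : ℤ) + N - τ v
  | Sum.inl (Sum.inr (Sum.inl _)) => 2
  | Sum.inl (Sum.inr (Sum.inr _)) => 0
  | Sum.inr _ => (N : ℤ) + 1

def myF2 : (V ⊕ V ⊕ V) ⊕ G.Dart → ℤ
  | Sum.inl (Sum.inl v) => 2 * (G.degree v : ℤ) + N - τ v
  | Sum.inl (Sum.inr (Sum.inl _)) => 2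
  | Sum.inl (Sum.inr (Sum.inr v)) => (N : ℤ) * G.degree v
  | Sum.inr _ => 0

def myF3 : (V ⊕ V ⊕ V) ⊕ G.Dart → ℤ
  | Sum.inl (Sum.inl v) => (G.degree v : ℤ) - τ v
  | Sum.inl (Sum.inr (Sum.inl _)) => (N : ℤ) + 2
  | Sum.inl (Sum.inr (Sum.inr v)) => (N : ℤ) * G.degree v
  | Sum.inr _ => 1

noncomputable def myLi : List ((V ⊕ V ⊕ V) ⊕ G.Dart) :=
  Finset.univ.toList.map (fun v : V => Sum.inl (Sum.inl v))

noncomputable def myLc : List ((V ⊕ V ⊕ V) ⊕ G.Dart) :=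
  Finset.univ.toList.map (fun v : V => Sum.inl (Sum.inr (Sum.inl v)))

noncomputable def myLo : List ((V ⊕ V ⊕ V) ⊕ G.Dart) :=
  Finset.univ.toList.map (fun v : V => Sum.inl (Sum.inr (Sum.inr v)))

noncomputable def myLp : List ((V ⊕ V ⊕ V) ⊕ G.Dart) :=
  Finset.univ.toList.map (fun d : G.Dart => Sum.inr d)

lemma my_play_o : mgPlay (consM G N) (myF0 G N τ) (myLo G) = myF1 G N τ := by
  funext u
  rw [myPlay_eq, myLo, List.map_map, Finset.sum_map_toList]
  rcases u with (v | v | v) | d <;>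
    simp [myF0, myF1, myDelta, consM, consAux, Function.comp, my_card_fst, my_card_snd, my_deg_o,
      Finset.sum_ite_eq, Finset.sum_ite_eq', my_sum_fst, my_sum_snd] <;>
    push_cast <;> ring

lemma my_play_p : mgPlay (consM G N) (myF1 G N τ) (myLp G) = myF2 G N τ := by
  funext u
  rw [myPlay_eq, myLp, List.map_map, Finset.sum_map_toList]
  rcases u with (v | v | v) | d <;>
    simp [myF1, myF2, myDelta, consM, consAux, Function.comp, my_card_fst, my_card_snd, my_deg_p,
      Finset.sum_ite_eq, Finset.sum_ite_eq', my_sum_fst, my_sum_snd] <;>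
    push_cast <;> ring

lemma my_play_i : mgPlay (consM G N) (myF2 G N τ) (myLi G) = myF3 G N τ := by
  funext u
  rw [myPlay_eq, myLi, List.map_map, Finset.sum_map_toList]
  rcases u with (v | v | v) | d <;>
    simp [myF2, myF3, myDelta, consM, consAux, Function.comp, my_card_fst, my_card_snd, my_deg_i,
      Finset.sum_ite_eq, Finset.sum_ite_eq', my_sum_fst, my_sum_snd] <;>
    push_cast <;> ring

lemma my_play_c : mgPlay (consM G N) (myF3 G N τ) (myLc G) = myF0 G N τ := by
  funext u
  rw [myPlay_eq, myLc, List.map_map, Finset.sum_map_toList]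
  rcases u with (v | v | v) | d <;>
    simp [myF3, myF0, myDelta, consM, consAux, Function.comp, my_card_fst, my_card_snd, my_deg_c,
      Finset.sum_ite_eq, Finset.sum_ite_eq', my_sum_fst, my_sum_snd] <;>
    push_cast <;> ring

lemma my_legal_o : mgLegal (consM G N) (myF0 G N τ) (myLo G) := by
  apply myLegal_phase
  · exact (Finset.nodup_toList _).map (fun a b h => by simpa using h)
  · intro a ha b hb
    simp only [myLo, List.mem_map] at ha hb
    obtain ⟨w, -, rfl⟩ := ha
    obtain ⟨w', -, rfl⟩ := hb
    simp [consM, consAux]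
  · intro u hu
    simp only [myLo, List.mem_map] at hu
    obtain ⟨w, -, rfl⟩ := hu
    rw [my_deg_o]
    simp only [myF0]
    push_cast
    linarith

lemma my_legal_p : mgLegal (consM G N) (myF1 G N τ) (myLp G) := by
  apply myLegal_phase
  · exact (Finset.nodup_toList _).map (fun a b h => by simpa using h)
  · intro a ha b hb
    simp only [myLp, List.mem_map] at ha hb
    obtain ⟨w, -, rfl⟩ := ha
    obtain ⟨w', -, rfl⟩ := hb
    simp [consM, consAux]
  · intro u hu
    simp only [myLp, List.mem_map] at hu
    obtain ⟨w, -, rfl⟩ := hu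
    rw [my_deg_p]
    simp only [myF1]
    push_cast
    omega

lemma my_legal_i (hτ : ∀ v, τ v ≤ G.degree v) :
    mgLegal (consM G N) (myF2 G N τ) (myLi G) := by
  apply myLegal_phase
  · exact (Finset.nodup_toList _).map (fun a b h => by simpa using h)
  · intro a ha b hb
    simp only [myLi, List.mem_map] at ha hb
    obtain ⟨w, -, rfl⟩ := ha
    obtain ⟨w', -, rfl⟩ := hb
    simp [consM, consAux]
  · intro u hu
    simp only [myLi, List.mem_map] at hu
    obtain ⟨w, -, rfl⟩ := hu
    rw [my_deg_i]
    simp only [myF2]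
    have := hτ w
    push_cast
    omega

lemma my_legal_c : mgLegal (consM G N) (myF3 G N τ) (myLc G) := by
  apply myLegal_phase
  · exact (Finset.nodup_toList _).map (fun a b h => by simpa using h)
  · intro a ha b hb
    simp only [myLc, List.mem_map] at ha hb
    obtain ⟨w, -, rfl⟩ := ha
    obtain ⟨w', -, rfl⟩ := hb
    simp [consM, consAux]
  · intro u hu
    simp only [myLc, List.mem_map] at hu
    obtain ⟨w, -, rfl⟩ := hu
    rw [my_deg_c]
    simp only [myF3]
    push_cast
    omega

def myG : (V ⊕ V ⊕ V) ⊕ G.Dart → ℤ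
  | Sum.inl (Sum.inr (Sum.inr _)) => 1
  | _ => 0

lemma my_x_add_g : consX G τ N + myG G = myF0 G N τ := by
  funext u
  rcases u with (v | v | v) | d <;> simp [consX, myG, myF0]

lemma my_recurrent [Nonempty V] (hτ : ∀ v, τ v ≤ G.degree v) :
    mgRecurrent (consM G N) (consX G τ N + myG G) := by
  rw [my_x_add_g]
  refine ⟨myLo G ++ (myLp G ++ (myLi G ++ myLc G)), ?_, ?_, ?_⟩
  · intro h
    have h0 : myLo G (V := V) ≠ [] := by
      simp only [myLo, ne_eq, List.map_eq_nil_iff, Finset.toList_eq_nil]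
      exact Finset.univ_nonempty.ne_empty
    simp only [List.append_eq_nil_iff] at h
    exact h0 h.1
  · rw [myLegal_append, my_play_o, myLegal_append, my_play_p, myLegal_append, my_play_i]
    exact ⟨my_legal_o G N τ, my_legal_p G N τ, my_legal_i G N τ hτ, my_legal_c G N τ⟩
  · rw [myPlay_append, my_play_o, myPlay_append, my_play_p, myPlay_append, my_play_i,
      my_play_c]

lemma my_effective : mgEffective (myG G) := by
  intro u
  rcases u with (v | v | v) | d <;> simp [myG]

lemma my_degdiv : mgDegDiv (myG G) = (Fintype.card V : ℤ) := by
  simp [mgDegDiv, Fintype.sum_sum_type, myG]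

end MyCons

/-- `N > dist_rec_{G'}(x) + 1` for the standard construction with
`N = |V| + 2`. -/
theorem stmt9 [Nonempty V] (G : SimpleGraph V) [DecidableRel G.Adj] (τ : V → ℕ)
    (hτ : ∀ v, τ v ≤ G.degree v) :
    Fintype.card V + 2 >
      mgDistRec (consM G (Fintype.card V + 2)) (consX G τ (Fintype.card V + 2)) + 1 := by
  have hmem : Fintype.card V ∈ {n : ℕ | ∃ g : (V ⊕ V ⊕ V) ⊕ G.Dart → ℤ, mgEffective g ∧
      mgDegDiv g = (n : ℤ) ∧
      mgRecurrent (consM G (Fintype.card V + 2)) (consX G τ (Fintype.card V + 2) + g)} :=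
    ⟨myG G, my_effective G, my_degdiv G, my_recurrent G (Fintype.card V + 2) τ hτ⟩
  have h := Nat.sInf_le hmem
  have h2 : mgDistRec (consM G (Fintype.card V + 2)) (consX G τ (Fintype.card V + 2))
      ≤ Fintype.card V := h
  omega
end
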